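/- Let P be the probability measure with density 3/2 on [0, 1/3] and 9/4 on [2/3, 7/9] ∪ [8/9, 1]. Then ∫ min((x - 1/6)², (x - 13/18)², (x - 17/18)²) dP = 5/972, and for every three-point set α ⊂ ℝ, ∫ min_{a ∈ α}(x-a)² dP ≥ 5/972; thus {1/6, 13/18, 17/18} is an optimal set of three-means with V₃ = 5/972. -/

import Mathlib

open MeasureTheory Set

/-- The density: `3/2` on `[0,1/3]`, `9/4` on `[2/3,7/9] ∪ [8/9,1]`, `0` elsewhere. -/
noncomputable def g (x : ℝ) : ℝ :=
  Set.indicator (Set.Icc (0 : ℝ) (1 / 3)) (fun _ => (3 : ℝ) / 2) x +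
    Set.indicator (Set.Icc ((2 : ℝ) / 3) (7 / 9) ∪ Set.Icc ((8 : ℝ) / 9) 1)
      (fun _ => (9 : ℝ) / 4) x

/-- The piecewise uniform probability measure with finitely many pieces. -/
noncomputable def Q : Measure ℝ :=
  MeasureTheory.volume.withDensity (fun x => ENNReal.ofReal (g x))

/-!
Sort the centres `a ≤ b ≤ c` and compare them with the thresholds `1/2`, between the pieces
`[0,1/3]` and `[2/3,7/9]`, and `5/6`, between `[2/3,7/9]` and `[8/9,1]`. For a point of a piece,
a centre beyond a threshold is no closer than the threshold itself, so on each piece the integrand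
dominates the squared distance to a few effective centres. Two estimates for the uniform measure
on an interval of length `L` then do the work: with `k` centres the error is at least `L³/(12k²)`
(Voronoi cells and convexity of `t ↦ t³`), and with one free centre plus a fixed one at distance
at least `L/2` beyond an endpoint it is at least `L³/12`. With one centre serving each piece this
gives `(3/2)·(1/3)³/12 + 2·(9/4)·(1/9)³/12 = 5/972`; every other configuration leaves some piece
served from far away and is estimated directly. The bound is attained at the midpoints
`1/6, 13/18, 17/18` of the pieces.
-/

lemma integral_sub_sq (u p q : ℝ) :
    ∫ x in p..q, (x - u) ^ 2 = ((q - u) ^ 3 - (p - u) ^ 3) / 3 := by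
  rw [intervalIntegral.integral_comp_sub_right (fun x : ℝ => x ^ 2), integral_pow]
  norm_num

lemma cube_sub_div_twelve_le {p q : ℝ} (hpq : p ≤ q) (u : ℝ) :
    (q - p) ^ 3 / 12 ≤ ((q - u) ^ 3 - (p - u) ^ 3) / 3 := by
  nlinarith [mul_nonneg (sub_nonneg.2 hpq) (sq_nonneg (p + q - 2 * u))]

lemma cube_div_le_add {p m q k : ℝ} (hpm : p ≤ m) (hmq : m ≤ q) (hk : 0 < k) :
    (q - p) ^ 3 / (12 * (k + 1) ^ 2) ≤ (m - p) ^ 3 / (12 * k ^ 2) + (q - m) ^ 3 / 12 := by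
  rw [div_add_div _ _ (by positivity) (by positivity),
    div_le_div_iff₀ (by positivity) (by positivity)]
  have hu : 0 ≤ m - p := by linarith
  have hv : 0 ≤ q - m := by linarith
  nlinarith [mul_nonneg (sq_nonneg ((m - p) - k * (q - m)))
    (by positivity : 0 ≤ (2 * k + 1) * (m - p) + (k + 2) * k * (q - m)), mul_nonneg hu hv,
    mul_pos hk hk]

lemma max_min_separates {p q : ℝ} (hpq : p ≤ q) (t : ℝ) :
    p ≤ max p (min q t) ∧ max p (min q t) ≤ q ∧ (∀ x ∈ Ioo p (max p (min q t)), x < t) ∧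
      ∀ x ∈ Ioo (max p (min q t)) q, t < x :=
  ⟨le_max_left _ _, max_le hpq (min_le_left _ _),
    fun _ hx => ((lt_max_iff.1 hx.2).resolve_left hx.1.not_gt).trans_le (min_le_right _ _),
    fun _ hx => (min_lt_iff.1 (max_lt_iff.1 hx.1).2).resolve_left hx.2.not_gt⟩

lemma sq_sub_le_sq_sub_of_two_mul_le {x u v : ℝ} (huv : u ≤ v) (hx : 2 * x ≤ u + v) :
    (x - u) ^ 2 ≤ (x - v) ^ 2 := by
  nlinarith

lemma sq_sub_le_sq_sub_of_le_two_mul {x u v : ℝ} (hvu : v ≤ u) (hx : u + v ≤ 2 * x) :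
    (x - u) ^ 2 ≤ (x - v) ^ 2 := by
  nlinarith

section UniformQuantization

variable {f : ℝ → ℝ} {p q : ℝ}

lemma IntervalIntegrable.split_at {m : ℝ} (hf : IntervalIntegrable f volume p q) (hpm : p ≤ m)
    (hmq : m ≤ q) : IntervalIntegrable f volume p m ∧ IntervalIntegrable f volume m q :=
  ⟨hf.mono_set (uIcc_subset_uIcc left_mem_uIcc (mem_uIcc_of_le hpm hmq)),
    hf.mono_set (uIcc_subset_uIcc (mem_uIcc_of_le hpm hmq) right_mem_uIcc)⟩

lemma integral_sub_sq_le_integral (hpq : p ≤ q) (hf : IntervalIntegrable f volume p q) {u : ℝ}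
    (h : ∀ x ∈ Ioo p q, (x - u) ^ 2 ≤ f x) :
    ((q - u) ^ 3 - (p - u) ^ 3) / 3 ≤ ∫ x in p..q, f x := by
  rw [← integral_sub_sq]
  exact intervalIntegral.integral_mono_on_of_le_Ioo hpq
    (by apply Continuous.intervalIntegrable; fun_prop) hf h

lemma integral_sub_sq_add_le_integral {m u v : ℝ} (hpm : p ≤ m) (hmq : m ≤ q)
    (hf : IntervalIntegrable f volume p q) (hu : ∀ x ∈ Ioo p m, (x - u) ^ 2 ≤ f x)
    (hv : ∀ x ∈ Ioo m q, (x - v) ^ 2 ≤ f x) :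
    ((m - u) ^ 3 - (p - u) ^ 3) / 3 + ((q - v) ^ 3 - (m - v) ^ 3) / 3 ≤ ∫ x in p..q, f x := by
  obtain ⟨hpm', hmq'⟩ := hf.split_at hpm hmq
  rw [← intervalIntegral.integral_add_adjacent_intervals hpm' hmq']
  exact add_le_add (integral_sub_sq_le_integral hpm hpm' hu)
    (integral_sub_sq_le_integral hmq hmq' hv)

theorem cube_div_le_integral_of_finset (s : Finset ℝ) :
    ∀ {p q : ℝ}, p ≤ q → IntervalIntegrable f volume p q →
      (∀ x ∈ Ioo p q, ∃ d ∈ s, (x - d) ^ 2 ≤ f x) →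
      (q - p) ^ 3 / (12 * (s.card : ℝ) ^ 2) ≤ ∫ x in p..q, f x := by
  classical
  induction s using Finset.induction_on_max with
  | empty =>
    intro p q hpq _ h
    obtain rfl | hlt := hpq.eq_or_lt
    · simp
    · obtain ⟨d, hd, _⟩ := h ((p + q) / 2) ⟨by linarith, by linarith⟩
      simp at hd
  | insert a s hlt ih =>
    intro p q hpq hf h
    rcases s.eq_empty_or_nonempty with rfl | hs
    · refine le_trans (by simpa using cube_sub_div_twelve_le hpq a)
        (integral_sub_sq_le_integral hpq hf fun x hx => ?_)
      obtain ⟨d, hd, hfx⟩ := h x hx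
      rwa [← Finset.mem_singleton.1 hd]
    -- `a` serves the points beyond the midpoint of `max s` and `a`, the set `s` those before it
    have hMa : s.max' hs < a := hlt _ (s.max'_mem hs)
    set m := max p (min q ((s.max' hs + a) / 2))
    obtain ⟨hpm, hmq, hleft, hright⟩ := max_min_separates hpq ((s.max' hs + a) / 2)
    obtain ⟨hpm', hmq'⟩ := hf.split_at hpm hmq
    have left : (m - p) ^ 3 / (12 * (s.card : ℝ) ^ 2) ≤ ∫ x in p..m, f x := by
      refine ih hpm hpm' fun x hx => ?_
      obtain ⟨d, hd, hfx⟩ := h x ⟨hx.1, hx.2.trans_le hmq⟩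
      rcases Finset.mem_insert.1 hd with rfl | hd
      · exact ⟨_, s.max'_mem hs,
          (sq_sub_le_sq_sub_of_two_mul_le hMa.le (by linarith [hleft x hx])).trans hfx⟩
      · exact ⟨d, hd, hfx⟩
    have right : (q - m) ^ 3 / 12 ≤ ∫ x in m..q, f x := by
      refine (cube_sub_div_twelve_le hmq a).trans
        (integral_sub_sq_le_integral hmq hmq' fun x hx => ?_)
      obtain ⟨d, hd, hfx⟩ := h x ⟨hpm.trans_lt hx.1, hx.2⟩
      rcases Finset.mem_insert.1 hd with rfl | hd
      · exact hfx
      · exact (sq_sub_le_sq_sub_of_le_two_mul (hlt d hd).le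
          (by linarith [s.le_max' d hd, hright x hx])).trans hfx
    have hcard : ((insert a s).card : ℝ) = s.card + 1 := by
      rw [Finset.card_insert_of_notMem fun ha => (hlt a ha).false]; push_cast; ring
    rw [← intervalIntegral.integral_add_adjacent_intervals hpm' hmq', hcard]
    exact (cube_div_le_add hpm hmq (by exact_mod_cast hs.card_pos)).trans (add_le_add left right)

theorem cube_div_twelve_le_integral_of_right_wall {c r : ℝ} (hpq : p ≤ q)
    (hr : 3 * q - p ≤ 2 * r) (hf : IntervalIntegrable f volume p q)
    (h : ∀ x ∈ Ioo p q, ∃ d ∈ ({c, r} : Set ℝ), (x - d) ^ 2 ≤ f x) :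
    (q - p) ^ 3 / 12 ≤ ∫ x in p..q, f x := by
  -- the wall only gets closer when moved in to `r₀`, and a centre beyond `r₀` can be replaced by it
  set r₀ := (3 * q - p) / 2 with hr₀
  set c₀ := min c r₀
  have hc₀ : c₀ ≤ r₀ := min_le_right _ _
  have h₀ : ∀ x ∈ Ioo p q, (x - c₀) ^ 2 ≤ f x ∨ (x - r₀) ^ 2 ≤ f x := by
    intro x hx
    obtain ⟨d, rfl | rfl, hfx⟩ := h x hx
    · rcases le_total d r₀ with hc | hc
      · exact .inl (by rwa [show c₀ = d from min_eq_left hc])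
      · exact .inr ((sq_sub_le_sq_sub_of_two_mul_le hc (by linarith [hx.2])).trans hfx)
    · exact .inr ((sq_sub_le_sq_sub_of_two_mul_le (by linarith) (by linarith [hx.2])).trans hfx)
  obtain ⟨hpm, hmq, hleft, hright⟩ := max_min_separates hpq ((c₀ + r₀) / 2)
  refine le_trans ?_ (integral_sub_sq_add_le_integral hpm hmq hf (u := c₀) (v := r₀)
    (fun x hx => (h₀ x ⟨hx.1, hx.2.trans_le hmq⟩).elim id fun hfx => ?_)
    (fun x hx => (h₀ x ⟨hpm.trans_lt hx.1, hx.2⟩).elim (fun hfx => ?_) id))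
  · rcases le_total ((c₀ + r₀) / 2) p with ht | ht
    · rw [max_eq_left ((min_le_right _ _).trans ht)]
      nlinarith [mul_nonneg (sub_nonneg.2 hpq) (sq_nonneg (p + q - 2 * r₀))]
    rcases le_total q ((c₀ + r₀) / 2) with ht' | ht'
    · rw [min_eq_left ht', max_eq_right hpq]
      nlinarith [mul_nonneg (sub_nonneg.2 hpq) (sq_nonneg (p + q - 2 * c₀))]
    · rw [min_eq_right ht', max_eq_right ht]
      clear_value r₀ c₀
      subst hr₀
      nlinarith [mul_nonneg (sq_nonneg (c₀ - (p + q) / 2))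
        (by linarith : 0 ≤ c₀ - p + 3 * (q - p) / 2)]
  · exact (sq_sub_le_sq_sub_of_two_mul_le hc₀ (by linarith [hleft x hx])).trans hfx
  · exact (sq_sub_le_sq_sub_of_le_two_mul hc₀ (by linarith [hright x hx])).trans hfx

theorem cube_div_twelve_le_integral_of_left_wall {c l : ℝ} (hpq : p ≤ q)
    (hl : 2 * l ≤ 3 * p - q) (hf : IntervalIntegrable f volume p q)
    (h : ∀ x ∈ Ioo p q, ∃ d ∈ ({c, l} : Set ℝ), (x - d) ^ 2 ≤ f x) :
    (q - p) ^ 3 / 12 ≤ ∫ x in p..q, f x := by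
  have hf' : IntervalIntegrable (fun x => f (-x)) volume (-q) (-p) :=
    ((IntervalIntegrable.iff_comp_neg (f := f)).1 hf).symm
  have key := cube_div_twelve_le_integral_of_right_wall (c := -c) (r := -l) (neg_le_neg hpq)
    (by linarith) hf' fun x hx => ?_
  · simpa [intervalIntegral.integral_comp_neg, neg_add_eq_sub] using key
  · obtain ⟨d, hd, hfx⟩ := h (-x) ⟨by linarith [hx.2], by linarith [hx.1]⟩
    refine ⟨-d, ?_, by convert hfx using 1; ring⟩
    rcases hd with rfl | rfl <;> simp

end UniformQuantization

lemma integral_indicator_Icc_const_mul (F : ℝ → ℝ) {a b : ℝ} (hab : a ≤ b) (k : ℝ) :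
    ∫ x, (Icc a b).indicator (fun x => k * F x) x = k * ∫ x in a..b, F x := by
  rw [integral_indicator measurableSet_Icc, integral_Icc_eq_integral_Ioc,
    ← intervalIntegral.integral_of_le hab, intervalIntegral.integral_const_mul]

lemma integral_Q {F : ℝ → ℝ} (hF : Continuous F) :
    ∫ x, F x ∂Q = 3 / 2 * (∫ x in 0..1 / 3, F x) + 9 / 4 * (∫ x in 2 / 3..7 / 9, F x) +
      9 / 4 * ∫ x in 8 / 9..1, F x := by
  have hg : Measurable g := by unfold g; measurability
  have hg₀ : ∀ x, 0 ≤ g x := fun x =>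
    add_nonneg (indicator_nonneg (by norm_num) x) (indicator_nonneg (by norm_num) x)
  have hdisj : Disjoint (Icc (2 / 3 : ℝ) (7 / 9)) (Icc (8 / 9) 1) :=
    disjoint_left.2 fun x hx hx' => by linarith [hx.2, hx'.1]
  have hgF : ∀ x, (ENNReal.ofReal (g x)).toReal • F x =
      (Icc 0 (1 / 3)).indicator (fun x => 3 / 2 * F x) x +
      (Icc (2 / 3) (7 / 9)).indicator (fun x => 9 / 4 * F x) x +
      (Icc (8 / 9) 1).indicator (fun x => 9 / 4 * F x) x := fun x => by
    rw [ENNReal.toReal_ofReal (hg₀ x), smul_eq_mul, g, indicator_union_of_disjoint hdisj]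
    simp only [indicator_apply]; split_ifs <;> ring
  have hint : ∀ a b k : ℝ, Integrable ((Icc a b).indicator fun x => k * F x) := fun a b k =>
    (integrable_indicator_iff measurableSet_Icc).2 (by fun_prop : Continuous _).integrableOn_Icc
  rw [Q, integral_withDensity_eq_integral_toReal_smul hg.ennreal_ofReal
      (ae_of_all _ fun _ => ENNReal.ofReal_lt_top), integral_congr_ae (ae_of_all _ hgF),
    integral_add _ (hint _ _ _), integral_add (hint _ _ _) (hint _ _ _),
    integral_indicator_Icc_const_mul F (by norm_num),
    integral_indicator_Icc_const_mul F (by norm_num),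
    integral_indicator_Icc_const_mul F (by norm_num)]
  exact (hint _ _ _).add (hint _ _ _)

def minSqDist (a b c x : ℝ) : ℝ := min (min ((x - a) ^ 2) ((x - b) ^ 2)) ((x - c) ^ 2)

lemma continuous_minSqDist (a b c : ℝ) : Continuous (minSqDist a b c) := by
  unfold minSqDist; fun_prop

lemma intervalIntegrable_minSqDist (a b c p q : ℝ) :
    IntervalIntegrable (minSqDist a b c) volume p q :=
  (continuous_minSqDist a b c).intervalIntegrable p q

lemma minSqDist_nonneg (a b c x : ℝ) : 0 ≤ minSqDist a b c x :=
  le_min (le_min (sq_nonneg _) (sq_nonneg _)) (sq_nonneg _)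

lemma exists_sorted_minSqDist_eq (a₁ a₂ a₃ : ℝ) :
    ∃ a b c, a ≤ b ∧ b ≤ c ∧ minSqDist a₁ a₂ a₃ = minSqDist a b c := by
  rcases le_total a₁ a₂ with h₁₂ | h₁₂ <;> rcases le_total a₂ a₃ with h₂₃ | h₂₃ <;>
    rcases le_total a₁ a₃ with h₁₃ | h₁₃
  all_goals first
    | exact ⟨a₁, a₂, a₃, ‹_›, ‹_›, rfl⟩
    | exact ⟨a₁, a₃, a₂, ‹_›, ‹_›, funext fun x => by simp only [minSqDist]; ac_rfl⟩
    | exact ⟨a₂, a₁, a₃, ‹_›, ‹_›, funext fun x => by simp only [minSqDist]; ac_rfl⟩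
    | exact ⟨a₂, a₃, a₁, ‹_›, ‹_›, funext fun x => by simp only [minSqDist]; ac_rfl⟩
    | exact ⟨a₃, a₁, a₂, ‹_›, ‹_›, funext fun x => by simp only [minSqDist]; ac_rfl⟩
    | exact ⟨a₃, a₂, a₁, ‹_›, ‹_›, funext fun x => by simp only [minSqDist]; ac_rfl⟩

lemma integral_minSqDist_nonneg (a b c : ℝ) {p q : ℝ} (hpq : p ≤ q) :
    0 ≤ ∫ x in p..q, minSqDist a b c x :=
  intervalIntegral.integral_nonneg hpq fun x _ => minSqDist_nonneg a b c x

lemma sq_sub_le_minSqDist {a b c x u : ℝ} (ha : (x - u) ^ 2 ≤ (x - a) ^ 2)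
    (hb : (x - u) ^ 2 ≤ (x - b) ^ 2) (hc : (x - u) ^ 2 ≤ (x - c) ^ 2) :
    (x - u) ^ 2 ≤ minSqDist a b c x :=
  le_min (le_min ha hb) hc

lemma exists_sq_sub_le_minSqDist {S : Set ℝ} {a b c x : ℝ}
    (ha : ∃ d ∈ S, (x - d) ^ 2 ≤ (x - a) ^ 2) (hb : ∃ d ∈ S, (x - d) ^ 2 ≤ (x - b) ^ 2)
    (hc : ∃ d ∈ S, (x - d) ^ 2 ≤ (x - c) ^ 2) : ∃ d ∈ S, (x - d) ^ 2 ≤ minSqDist a b c x := by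
  unfold minSqDist
  rcases min_choice (min ((x - a) ^ 2) ((x - b) ^ 2)) ((x - c) ^ 2) with h | h <;> rw [h]
  · rcases min_choice ((x - a) ^ 2) ((x - b) ^ 2) with h' | h' <;> rw [h'] <;> assumption
  · assumption

section LowerBound

variable {a b c : ℝ}

lemma le_integral_left_two_centers (hc : 1 / 2 ≤ c) :
    1 / 2916 ≤ ∫ x in 0..1 / 3, minSqDist a b c x := by
  have key := cube_div_le_integral_of_finset {a, b, 1 / 2} (by norm_num)
    (intervalIntegrable_minSqDist a b c 0 (1 / 3)) fun x hx =>
      exists_sq_sub_le_minSqDist ⟨a, by simp, le_rfl⟩ ⟨b, by simp, le_rfl⟩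
        ⟨1 / 2, by simp, sq_sub_le_sq_sub_of_two_mul_le hc (by linarith [hx.2])⟩
  have hcard : (({a, b, 1 / 2} : Finset ℝ).card : ℝ) ≤ 3 := by exact_mod_cast Finset.card_le_three
  have hpos : (0 : ℝ) < ({a, b, 1 / 2} : Finset ℝ).card := by
    exact_mod_cast Finset.card_pos.2 (Finset.insert_nonempty _ _)
  calc (1 : ℝ) / 2916 = (1 / 3 - 0) ^ 3 / (12 * 3 ^ 2) := by norm_num
    _ ≤ _ := by gcongr
    _ ≤ _ := key

lemma le_integral_mid_add_right_one_center (hab : a ≤ b) (hb : b ≤ 1 / 2) (hc : 1 / 2 ≤ c) :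
    1 / 486 ≤ (∫ x in 2 / 3..7 / 9, minSqDist a b c x) + ∫ x in 8 / 9..1, minSqDist a b c x := by
  have hf := intervalIntegrable_minSqDist a b c
  have hbc := hb.trans hc
  have near_c : ∀ x, c + b ≤ 2 * x → (x - c) ^ 2 ≤ minSqDist a b c x := fun x hx =>
    sq_sub_le_minSqDist (sq_sub_le_sq_sub_of_le_two_mul (hab.trans hbc) (by linarith))
      (sq_sub_le_sq_sub_of_le_two_mul hbc hx) le_rfl
  have near_half : ∀ x, 1 / 2 + b ≤ 2 * x → 2 * x ≤ 1 / 2 + c →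
      (x - 1 / 2) ^ 2 ≤ minSqDist a b c x := fun x hx hx' =>
    sq_sub_le_minSqDist (sq_sub_le_sq_sub_of_le_two_mul (by linarith) (by linarith))
      (sq_sub_le_sq_sub_of_le_two_mul hb hx) (sq_sub_le_sq_sub_of_two_mul_le hc hx')
  rcases le_total c (5 / 6) with hc₁ | hc₁
  · have h₂ := integral_sub_sq_le_integral (by norm_num) (hf (2 / 3) (7 / 9)) fun x hx =>
      near_c x (by linarith [hx.1])
    have h₃ := integral_sub_sq_le_integral (by norm_num) (hf (8 / 9) 1) fun x hx =>
      near_c x (by linarith [hx.1])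
    nlinarith [sq_nonneg (c - 5 / 6)]
  -- past `c = 19/18` the cut between `c` and `1/2` (standing in for `a`, `b`) leaves `[2/3, 7/9]`
  rcases le_total c (19 / 18) with hc₂ | hc₂
  · have h₂ := integral_sub_sq_add_le_integral (m := (1 / 2 + c) / 2) (by linarith) (by linarith)
      (hf (2 / 3) (7 / 9)) (fun x hx => near_half x (by linarith [hx.1]) (by linarith [hx.2]))
      fun x hx => near_c x (by linarith [hx.1])
    have h₃ := integral_sub_sq_le_integral (by norm_num) (hf (8 / 9) 1) fun x hx =>
      near_c x (by linarith [hx.1])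
    nlinarith [sq_nonneg (c - 17 / 18)]
  · have h₂ := integral_sub_sq_le_integral (by norm_num) (hf (2 / 3) (7 / 9)) fun x hx =>
      near_half x (by linarith [hx.1]) (by linarith [hx.2])
    have h₃ := integral_minSqDist_nonneg a b c (by norm_num : (8 / 9 : ℝ) ≤ 1)
    linarith

lemma le_integral_left_one_center (hb : 1 / 2 ≤ b) (hc : 1 / 2 ≤ c) :
    1 / 324 ≤ ∫ x in 0..1 / 3, minSqDist a b c x :=
  (by norm_num : (1 : ℝ) / 324 = (1 / 3 - 0) ^ 3 / 12).trans_le <|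
    cube_div_twelve_le_integral_of_right_wall (c := a) (r := 1 / 2) (by norm_num) (by norm_num)
      (intervalIntegrable_minSqDist a b c 0 (1 / 3)) fun x hx =>
        exists_sq_sub_le_minSqDist ⟨a, by simp, le_rfl⟩
          ⟨1 / 2, by simp, sq_sub_le_sq_sub_of_two_mul_le hb (by linarith [hx.2])⟩
          ⟨1 / 2, by simp, sq_sub_le_sq_sub_of_two_mul_le hc (by linarith [hx.2])⟩

lemma le_integral_mid_one_center (hab : a ≤ b) (ha : a ≤ 1 / 2) (hb : b ≤ 5 / 6)
    (hc : 5 / 6 ≤ c) : 1 / 8748 ≤ ∫ x in 2 / 3..7 / 9, minSqDist a b c x :=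
  (by norm_num : (1 : ℝ) / 8748 = (7 / 9 - 2 / 3) ^ 3 / 12).trans_le <|
    cube_div_twelve_le_integral_of_right_wall (c := b) (r := 5 / 6) (by norm_num) (by norm_num)
      (intervalIntegrable_minSqDist a b c (2 / 3) (7 / 9)) fun x hx =>
        exists_sq_sub_le_minSqDist
          ⟨b, by simp, sq_sub_le_sq_sub_of_le_two_mul hab (by linarith [hx.1])⟩
          ⟨b, by simp, le_rfl⟩
          ⟨5 / 6, by simp, sq_sub_le_sq_sub_of_two_mul_le hc (by linarith [hx.2])⟩

lemma le_integral_right_one_center (ha : a ≤ 5 / 6) (hb : b ≤ 5 / 6) :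
    1 / 8748 ≤ ∫ x in 8 / 9..1, minSqDist a b c x :=
  (by norm_num : (1 : ℝ) / 8748 = (1 - 8 / 9) ^ 3 / 12).trans_le <|
    cube_div_twelve_le_integral_of_left_wall (c := c) (l := 5 / 6) (by norm_num) (by norm_num)
      (intervalIntegrable_minSqDist a b c (8 / 9) 1) fun x hx =>
        exists_sq_sub_le_minSqDist
          ⟨5 / 6, by simp, sq_sub_le_sq_sub_of_le_two_mul ha (by linarith [hx.1])⟩
          ⟨5 / 6, by simp, sq_sub_le_sq_sub_of_le_two_mul hb (by linarith [hx.1])⟩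
          ⟨c, by simp, le_rfl⟩

lemma le_weighted_integrals_of_le_half_le (hab : a ≤ b) (hbc : b ≤ c) (ha : a ≤ 1 / 2)
    (hb : 1 / 2 ≤ b) :
    5 / 972 ≤ 3 / 2 * (∫ x in 0..1 / 3, minSqDist a b c x) +
      9 / 4 * (∫ x in 2 / 3..7 / 9, minSqDist a b c x) +
      9 / 4 * ∫ x in 8 / 9..1, minSqDist a b c x := by
  have h₁ := le_integral_left_one_center (a := a) hb (hb.trans hbc)
  have h₂ := integral_minSqDist_nonneg a b c (by norm_num : (2 / 3 : ℝ) ≤ 7 / 9)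
  have h₃ := integral_minSqDist_nonneg a b c (by norm_num : (8 / 9 : ℝ) ≤ 1)
  rcases le_total (5 / 6) b with hb' | hb'
  · have h₂' := integral_sub_sq_le_integral (u := 5 / 6) (by norm_num)
      (intervalIntegrable_minSqDist a b c (2 / 3) (7 / 9)) fun x hx => sq_sub_le_minSqDist
        (sq_sub_le_sq_sub_of_le_two_mul (by linarith) (by linarith [hx.1]))
        (sq_sub_le_sq_sub_of_two_mul_le hb' (by linarith [hx.2]))
        (sq_sub_le_sq_sub_of_two_mul_le (hb'.trans hbc) (by linarith [hx.2]))
    linarith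
  rcases le_total c (5 / 6) with hc | hc
  · have h₃' := integral_sub_sq_le_integral (u := 5 / 6) (by norm_num)
      (intervalIntegrable_minSqDist a b c (8 / 9) 1) fun x hx => sq_sub_le_minSqDist
        (sq_sub_le_sq_sub_of_le_two_mul (by linarith) (by linarith [hx.1]))
        (sq_sub_le_sq_sub_of_le_two_mul hb' (by linarith [hx.1]))
        (sq_sub_le_sq_sub_of_le_two_mul hc (by linarith [hx.1]))
    linarith
  · have h₂' := le_integral_mid_one_center hab ha hb' hc
    have h₃' := le_integral_right_one_center (c := c) (ha.trans (by norm_num)) hb'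
    linarith

theorem le_integral_minSqDist (hab : a ≤ b) (hbc : b ≤ c) :
    5 / 972 ≤ ∫ x, minSqDist a b c x ∂Q := by
  rw [integral_Q (continuous_minSqDist a b c)]
  have h₁ := integral_minSqDist_nonneg a b c (by norm_num : (0 : ℝ) ≤ 1 / 3)
  have h₃ := integral_minSqDist_nonneg a b c (by norm_num : (8 / 9 : ℝ) ≤ 1)
  rcases le_total c (1 / 2) with hc | hc
  · have h₂ := integral_sub_sq_le_integral (u := 1 / 2) (by norm_num)
      (intervalIntegrable_minSqDist a b c (2 / 3) (7 / 9)) fun x hx => sq_sub_le_minSqDist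
        (sq_sub_le_sq_sub_of_le_two_mul (by linarith) (by linarith [hx.1]))
        (sq_sub_le_sq_sub_of_le_two_mul (by linarith) (by linarith [hx.1]))
        (sq_sub_le_sq_sub_of_le_two_mul hc (by linarith [hx.1]))
    norm_num at h₂
    linarith
  rcases le_total (1 / 2) a with ha | ha
  · have h₁' := integral_sub_sq_le_integral (u := 1 / 2) (by norm_num)
      (intervalIntegrable_minSqDist a b c 0 (1 / 3)) fun x hx => sq_sub_le_minSqDist
        (sq_sub_le_sq_sub_of_two_mul_le ha (by linarith [hx.2]))
        (sq_sub_le_sq_sub_of_two_mul_le (by linarith) (by linarith [hx.2]))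
        (sq_sub_le_sq_sub_of_two_mul_le (by linarith) (by linarith [hx.2]))
    have h₂ := integral_minSqDist_nonneg a b c (by norm_num : (2 / 3 : ℝ) ≤ 7 / 9)
    norm_num at h₁'
    linarith
  rcases le_total b (1 / 2) with hb | hb
  · linarith [le_integral_left_two_centers (a := a) (b := b) hc,
      le_integral_mid_add_right_one_center hab hb hc]
  · exact le_weighted_integrals_of_le_half_le hab hbc ha hb

end LowerBound

lemma integral_minSqDist_midpoints_le :
    ∫ x, minSqDist (1 / 6) (13 / 18) (17 / 18) x ∂Q ≤ 5 / 972 := by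
  rw [integral_Q (continuous_minSqDist _ _ _)]
  have hf := intervalIntegrable_minSqDist (1 / 6) (13 / 18) (17 / 18)
  have hsq : ∀ (u p q : ℝ), IntervalIntegrable (fun x => (x - u) ^ 2) volume p q := fun u p q => by
    apply Continuous.intervalIntegrable; fun_prop
  have h₁ := intervalIntegral.integral_mono (by norm_num) (hf 0 (1 / 3)) (hsq (1 / 6) _ _)
    fun x => (min_le_left _ _).trans (min_le_left _ _)
  have h₂ := intervalIntegral.integral_mono (by norm_num) (hf (2 / 3) (7 / 9)) (hsq (13 / 18) _ _)
    fun x => (min_le_left _ _).trans (min_le_right _ _)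
  have h₃ := intervalIntegral.integral_mono (by norm_num) (hf (8 / 9) 1) (hsq (17 / 18) _ _)
    fun x => min_le_right _ _
  rw [integral_sub_sq] at h₁ h₂ h₃
  norm_num at h₁ h₂ h₃
  linarith

theorem stmt_15 :
    (∫ x, min (min ((x - 1 / 6) ^ 2) ((x - 13 / 18) ^ 2)) ((x - 17 / 18) ^ 2) ∂Q) = 5 / 972 ∧
    ∀ a₁ a₂ a₃ : ℝ,
      5 / 972 ≤ ∫ x, min (min ((x - a₁) ^ 2) ((x - a₂) ^ 2)) ((x - a₃) ^ 2) ∂Q := by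
  refine ⟨le_antisymm integral_minSqDist_midpoints_le
    (le_integral_minSqDist (by norm_num) (by norm_num)), fun a₁ a₂ a₃ => ?_⟩
  obtain ⟨a, b, c, hab, hbc, h⟩ := exists_sorted_minSqDist_eq a₁ a₂ a₃
  change 5 / 972 ≤ ∫ x, minSqDist a₁ a₂ a₃ x ∂Q
  rw [h]
  exact le_integral_minSqDist hab hbc
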